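/- For every ε > 0, setting c := 2/(2+ε), one has (1/ε)·∫_c^1 x^{-1/ε} / (x√(1-x)) dx ≥ (2/ε)·artanh(√(ε/(2+ε))). (This is the lower bound on the comoving distance d_causal traversed between the earliest scale factor a₀ and the scale factor a₁ of sign change of ä, in the exotic-fluid reflective big bang model with p = 4 + ε.) -/

import Mathlib

open MeasureTheory

noncomputable def artanh (x : ℝ) : ℝ := (1 / 2) * Real.log ((1 + x) / (1 - x))

/-- For every `ε > 0`, with `c = 2/(2+ε)`, one has
`(1/ε)·∫_c^1 x^{-1/ε}/(x√(1-x)) dx ≥ (2/ε)·artanh(√(ε/(2+ε)))`: the lower bound on the comoving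
distance traversed between the earliest scale factor `a₀` and the scale factor `a₁` in the
exotic-fluid reflective big bang model with `p = 4 + ε`. -/
theorem causal_distance_lower_bound (ε : ℝ) (hε : 0 < ε) :
    (1 / ε) * ∫ x in Set.Ioo (2 / (2 + ε)) 1, x ^ (-1 / ε) / (x * Real.sqrt (1 - x))
      ≥ (2 / ε) * artanh (Real.sqrt (ε / (2 + ε))) := by
  have h2ε : (0:ℝ) < 2 + ε := by linarith
  set c : ℝ := 2 / (2 + ε) with hc
  have hc0 : 0 < c := by positivity
  have hc1 : c < 1 := by rw [hc, div_lt_one h2ε]; linarith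
  have hkey : 1 - c = ε / (2 + ε) := by rw [hc]; field_simp; ring
  set f : ℝ → ℝ := fun x => x ^ (-1/ε) / (x * Real.sqrt (1 - x)) with hfdef
  set g : ℝ → ℝ := fun x => 1 / (x * Real.sqrt (1 - x)) with hgdef
  set F : ℝ → ℝ := fun x => Real.log (1 - Real.sqrt (1 - x)) - Real.log (1 + Real.sqrt (1 - x))
    with hFdef
  -- derivative of F
  have hderiv : ∀ x ∈ Set.Ioo (0:ℝ) 1, HasDerivAt F (g x) x := by
    intro x hx
    obtain ⟨hx0, hx1⟩ := hx
    have h1x : 0 < 1 - x := by linarith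
    set u := Real.sqrt (1 - x) with hu
    have hu0 : 0 < u := Real.sqrt_pos.2 h1x
    have hu2 : u ^ 2 = 1 - x := Real.sq_sqrt h1x.le
    have hu1 : u < 1 := by nlinarith
    have hsq : HasDerivAt (fun y : ℝ => 1 - y) (-1) x := by
      simpa using (hasDerivAt_id x).const_sub 1
    have hus : HasDerivAt (fun y => Real.sqrt (1 - y)) (1 / (2 * u) * (-1)) x :=
      (Real.hasDerivAt_sqrt h1x.ne').comp x hsq
    have hA : HasDerivAt (fun y => 1 - Real.sqrt (1 - y)) (-(1 / (2 * u) * (-1))) x :=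
      hus.const_sub 1
    have hB : HasDerivAt (fun y => 1 + Real.sqrt (1 - y)) (1 / (2 * u) * (-1)) x :=
      hus.const_add 1
    have hlA := hA.log (by nlinarith : (1:ℝ) - u ≠ 0)
    have hlB := hB.log (by nlinarith : (1:ℝ) + u ≠ 0)
    have hFD := hlA.sub hlB
    convert hFD using 1
    · exact rfl
    · exact rfl
    · exact rfl
    have hx' : x = 1 - u ^ 2 := by linarith
    have h1u : (1:ℝ) - u ≠ 0 := by nlinarith
    have h2u : (1:ℝ) + u ≠ 0 := by nlinarith
    rw [hgdef]
    have hs : Real.sqrt (1 - x) = u := rfl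
    rw [hs, hx']
    have hx0' : (1:ℝ) - u ^ 2 ≠ 0 := by nlinarith
    simp only [sub_sub_cancel, Real.sqrt_sq hu0.le]
    field_simp
    ring
  -- continuity lemmas
  have hgcont : ContinuousOn g (Set.Icc c 1 \ {1}) := by
    intro x hx
    obtain ⟨⟨hxc, hx1'⟩, hxne⟩ := hx
    have hx1 : x < 1 := lt_of_le_of_ne hx1' (by simpa using hxne)
    have hx0 : 0 < x := lt_of_lt_of_le hc0 hxc
    have : ContinuousAt g x := by
      apply ContinuousAt.div continuousAt_const
      · exact continuousAt_id.mul ((Real.continuous_sqrt.continuousAt).comp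
          ((continuous_const.sub continuous_id).continuousAt))
      · have : 0 < Real.sqrt (1 - x) := Real.sqrt_pos.2 (by linarith)
        positivity
    exact this.continuousWithinAt
  have hfcont : ContinuousOn f (Set.Icc c 1 \ {1}) := by
    intro x hx
    obtain ⟨⟨hxc, hx1'⟩, hxne⟩ := hx
    have hx1 : x < 1 := lt_of_le_of_ne hx1' (by simpa using hxne)
    have hx0 : 0 < x := lt_of_lt_of_le hc0 hxc
    have : ContinuousAt f x := by
      apply ContinuousAt.div
      · exact (continuousAt_id.rpow continuousAt_const (Or.inl hx0.ne'))
      · exact continuousAt_id.mul ((Real.continuous_sqrt.continuousAt).comp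
          ((continuous_const.sub continuous_id).continuousAt))
      · have : 0 < Real.sqrt (1 - x) := Real.sqrt_pos.2 (by linarith)
        positivity
    exact this.continuousWithinAt
  -- integrability of f on Ioo c 1
  have hmaj : IntegrableOn (fun x : ℝ => c ^ (-1/ε) / c * (1 - x) ^ (-(1/2) : ℝ))
      (Set.Ioo c 1) volume := by
    have h1 : IntervalIntegrable (fun y : ℝ => y ^ (-(1/2) : ℝ)) volume 0 (1 - c) :=
      intervalIntegral.intervalIntegrable_rpow' (by norm_num)
    have h2 := (h1.comp_sub_left 1)
    simp only [sub_zero, sub_sub_cancel] at h2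
    have h3 : IntegrableOn (fun x : ℝ => (1 - x) ^ (-(1/2) : ℝ)) (Set.Ioc c 1) volume :=
      (intervalIntegrable_iff_integrableOn_Ioc_of_le hc1.le).1 h2.symm
    exact ((h3.mono_set Set.Ioo_subset_Ioc_self).const_mul _)
  have hf_int : IntegrableOn f (Set.Ioo c 1) volume := by
    apply Integrable.mono' hmaj
    · exact (hfcont.mono (by intro x hx; exact ⟨⟨hx.1.le, hx.2.le⟩, by simp [ne_of_lt hx.2]⟩)
        ).aestronglyMeasurable measurableSet_Ioo
    · filter_upwards [ae_restrict_mem measurableSet_Ioo] with x hx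
      obtain ⟨hxc, hx1⟩ := hx
      have hx0 : 0 < x := lt_of_lt_of_le hc0 hxc.le
      have h1x : 0 < 1 - x := by linarith
      have hs : 0 < Real.sqrt (1 - x) := Real.sqrt_pos.2 h1x
      have hfx : 0 < f x := by
        rw [hfdef]
        have : (0:ℝ) < x ^ (-1/ε) := Real.rpow_pos_of_pos hx0 _
        positivity
      rw [Real.norm_of_nonneg hfx.le]
      have hrw : (1 - x) ^ (-(1/2) : ℝ) = (Real.sqrt (1 - x))⁻¹ := by
        rw [Real.sqrt_eq_rpow, ← Real.rpow_neg h1x.le]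
      rw [hfdef, hrw]
      have hnum : x ^ (-1/ε) ≤ c ^ (-1/ε) :=
        Real.rpow_le_rpow_of_nonpos hc0 hxc.le
          (by rw [neg_div]; exact neg_nonpos.2 (le_of_lt (by positivity)))
      calc x ^ (-1/ε) / (x * Real.sqrt (1 - x)) ≤ c ^ (-1/ε) / (c * Real.sqrt (1 - x)) := by
            apply div_le_div₀ (by positivity) hnum (by positivity)
            exact mul_le_mul_of_nonneg_right hxc.le (Real.sqrt_nonneg _)
        _ = c ^ (-1/ε) / c * (Real.sqrt (1 - x))⁻¹ := by
            field_simp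
  -- f nonneg on Ioo c 1
  have hf_nonneg : 0 ≤ᵐ[volume.restrict (Set.Ioo c 1)] f := by
    filter_upwards [ae_restrict_mem measurableSet_Ioo] with x hx
    have hx0 : 0 < x := lt_trans hc0 hx.1
    have : (0:ℝ) < x ^ (-1/ε) := Real.rpow_pos_of_pos hx0 _
    have hs : 0 ≤ Real.sqrt (1 - x) := Real.sqrt_nonneg _
    rw [hfdef]
    positivity
  -- main bound for each b ∈ (c,1)
  have hbnd : ∀ b ∈ Set.Ioo c 1, F b - F c ≤ ∫ x in Set.Ioo c 1, f x := by
    intro b hb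
    obtain ⟨hbc, hb1⟩ := hb
    have hsubIcc : Set.Icc c b ⊆ Set.Icc c 1 \ {1} := by
      intro x hx
      exact ⟨⟨hx.1, hx.2.trans hb1.le⟩, by simp; intro h; linarith [hx.2, h ▸ hb1]⟩
    have hgi : IntervalIntegrable g volume c b := by
      apply ContinuousOn.intervalIntegrable
      rw [Set.uIcc_of_le hbc.le]
      exact hgcont.mono hsubIcc
    have hfi : IntervalIntegrable f volume c b := by
      apply ContinuousOn.intervalIntegrable
      rw [Set.uIcc_of_le hbc.le]
      exact hfcont.mono hsubIcc
    have hftc : ∫ x in c..b, g x = F b - F c := by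
      apply intervalIntegral.integral_eq_sub_of_hasDerivAt
      · intro x hx
        rw [Set.uIcc_of_le hbc.le] at hx
        exact hderiv x ⟨lt_of_lt_of_le hc0 hx.1, lt_of_le_of_lt hx.2 hb1⟩
      · exact hgi
    have hmono : ∫ x in c..b, g x ≤ ∫ x in c..b, f x := by
      apply intervalIntegral.integral_mono_on hbc.le hgi hfi
      intro x hx
      have hx0 : 0 < x := lt_of_lt_of_le hc0 hx.1
      have hx1 : x ≤ 1 := hx.2.trans hb1.le
      have h1 : 1 ≤ x ^ (-1/ε) :=
        Real.one_le_rpow_of_pos_of_le_one_of_nonpos hx0 hx1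
          (by rw [neg_div]; exact neg_nonpos.2 (le_of_lt (by positivity)))
      rw [hfdef, hgdef]
      exact div_le_div_of_nonneg_right h1 (by positivity)
    have heq : ∫ x in c..b, f x = ∫ x in Set.Ioo c b, f x := by
      rw [intervalIntegral.integral_of_le hbc.le, integral_Ioc_eq_integral_Ioo]
    have hsub : ∫ x in Set.Ioo c b, f x ≤ ∫ x in Set.Ioo c 1, f x := by
      apply setIntegral_mono_set hf_int hf_nonneg
      exact HasSubset.Subset.eventuallyLE (Set.Ioo_subset_Ioo le_rfl hb1.le)
    linarith [hftc ▸ hmono, heq ▸ hsub]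
  -- limit of F at 1⁻
  have hF1 : F 1 = 0 := by simp [hFdef]
  have hFlim : Filter.Tendsto F (nhdsWithin 1 (Set.Iio 1)) (nhds 0) := by
    have hcont : ContinuousAt F 1 := by
      have hin : ContinuousAt (fun x : ℝ => Real.sqrt (1 - x)) 1 :=
        (Real.continuous_sqrt.comp (continuous_const.sub continuous_id)).continuousAt
      exact ((continuousAt_const.sub hin).log (by simp)).sub
        ((continuousAt_const.add hin).log (by simp))
    have := hcont.continuousWithinAt (s := Set.Iio 1)
    rw [ContinuousWithinAt, hF1] at this
    exact this
  -- conclude 2 * artanh(√(1-c)) ≤ ∫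
  have hmain : -F c ≤ ∫ x in Set.Ioo c 1, f x := by
    have hev : ∀ᶠ b in nhdsWithin 1 (Set.Iio 1), F b - F c ≤ ∫ x in Set.Ioo c 1, f x := by
      filter_upwards [Ioo_mem_nhdsLT_of_mem (Set.mem_Ioc.2 ⟨hc1, le_rfl⟩)] with b hb
      exact hbnd b hb
    have := le_of_tendsto (hFlim.sub_const (F c)) hev
    simpa using this
  have hart : -F c = 2 * artanh (Real.sqrt (1 - c)) := by
    set u := Real.sqrt (1 - c) with hu
    have h1c : 0 < 1 - c := by linarith
    have hu0 : 0 < u := Real.sqrt_pos.2 h1c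
    have hu2 : u ^ 2 = 1 - c := Real.sq_sqrt h1c.le
    have hu1 : u < 1 := by nlinarith
    rw [artanh, hFdef]
    rw [Real.log_div (by nlinarith) (by nlinarith)]
    ring
  rw [ge_iff_le, ← hkey]
  have h2a : (2/ε) * artanh (Real.sqrt (1 - c)) = (1/ε) * (2 * artanh (Real.sqrt (1 - c))) := by
    ring
  rw [h2a]
  apply mul_le_mul_of_nonneg_left _ (le_of_lt (by positivity))
  rw [← hart]
  exact hmain
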